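/- arXiv:1601.06114 — 12 statements merged into one kernel-verified Lean document; each statement's English description precedes it below -/
import Mathlib

section
/- If x ∈ ℂⁿ satisfies ‖x‖₂² = n and x*Cx ≥ z*Cz, then the distance d(z,x) = √(2(n - |z*x|)) satisfies d(z,x) ≤ 4‖Δ‖_op/√n. -/
/-!
Rotate `x` by a unit scalar `c` so that `⟪z, c • x⟫ = t := ‖⟪z, x⟫‖` is real. With
`r = ‖z‖ = ‖x‖` and `d = ‖c • x - z‖` this gives `d ^ 2 = 2 * (r ^ 2 - t)`, while the rotation
leaves the quadratic form of `Δ` unchanged. Optimality of `x` then gives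
`r ^ 2 * d ^ 2 / 2 = r ^ 2 * (r ^ 2 - t) ≤ r ^ 4 - t ^ 2 ≤ 2 * ‖Δ‖ * r * d`, i.e. `r * d ≤ 4 * ‖Δ‖`.
-/

open scoped Matrix.Norms.L2Operator
open Matrix Complex

noncomputable section

open scoped InnerProductSpace
open RCLike WithLp ComplexConjugate

section InnerProductSpace

variable {𝕜 E : Type*} [RCLike 𝕜] [NormedAddCommGroup E] [InnerProductSpace 𝕜 E]

theorem re_inner_map_self_sub_le (T : E →L[𝕜] E) (v w : E) :
    re ⟪v, T v⟫_𝕜 - re ⟪w, T w⟫_𝕜 ≤ ‖T‖ * (‖v‖ + ‖w‖) * ‖v - w‖ := by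
  have hsplit : ⟪v, T v⟫_𝕜 - ⟪w, T w⟫_𝕜 = ⟪v - w, T v⟫_𝕜 + ⟪w, T (v - w)⟫_𝕜 := by
    rw [inner_sub_left, map_sub, inner_sub_right]
    ring
  calc re ⟪v, T v⟫_𝕜 - re ⟪w, T w⟫_𝕜 = re (⟪v - w, T v⟫_𝕜 + ⟪w, T (v - w)⟫_𝕜) := by
        rw [← hsplit, map_sub]
    _ ≤ ‖⟪v - w, T v⟫_𝕜‖ + ‖⟪w, T (v - w)⟫_𝕜‖ := (RCLike.re_le_norm _).trans (norm_add_le _ _)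
    _ ≤ ‖v - w‖ * (‖T‖ * ‖v‖) + ‖w‖ * (‖T‖ * ‖v - w‖) := by
        gcongr <;> exact (norm_inner_le_norm _ _).trans (by gcongr; exact T.le_opNorm _)
    _ = ‖T‖ * (‖v‖ + ‖w‖) * ‖v - w‖ := by ring

theorem exists_norm_eq_one_inner_smul_eq_norm (z x : E) :
    ∃ c : 𝕜, ‖c‖ = 1 ∧ ⟪z, c • x⟫_𝕜 = ‖⟪z, x⟫_𝕜‖ := by
  by_cases hzx : ⟪z, x⟫_𝕜 = 0
  · exact ⟨1, norm_one, by simp [hzx]⟩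
  have hpos : (‖⟪z, x⟫_𝕜‖ : 𝕜) ≠ 0 := ofReal_ne_zero.mpr (norm_ne_zero_iff.mpr hzx)
  refine ⟨conj ⟪z, x⟫_𝕜 / ‖⟪z, x⟫_𝕜‖, ?_, ?_⟩
  · rw [norm_div, RCLike.norm_conj, norm_ofReal, abs_norm, div_self (norm_ne_zero_iff.mpr hzx)]
  · rw [inner_smul_right, div_mul_eq_mul_div, RCLike.conj_mul, sq, mul_div_assoc, div_self hpos,
      mul_one]

theorem inner_smul_map_smul_self {c : 𝕜} (hc : ‖c‖ = 1) (T : E →L[𝕜] E) (x : E) :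
    ⟪c • x, T (c • x)⟫_𝕜 = ⟪x, T x⟫_𝕜 := by
  rw [map_smul, inner_smul_left, inner_smul_right, ← mul_assoc, RCLike.conj_mul, hc]
  simp

theorem sqrt_two_mul_sub_norm_inner_le_of_re_inner_le {T : E →L[𝕜] E} {z x : E}
    (hx : ‖x‖ = ‖z‖)
    (hopt : ‖z‖ ^ 4 + re ⟪z, T z⟫_𝕜 ≤ ‖⟪z, x⟫_𝕜‖ ^ 2 + re ⟪x, T x⟫_𝕜) :
    √(2 * (‖z‖ ^ 2 - ‖⟪z, x⟫_𝕜‖)) ≤ 4 * ‖T‖ / ‖z‖ := by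
  set r := ‖z‖
  set t := ‖⟪z, x⟫_𝕜‖
  obtain ⟨c, hc, hzy⟩ := exists_norm_eq_one_inner_smul_eq_norm (𝕜 := 𝕜) z x
  set y := c • x
  have hy : ‖y‖ = r := by rw [norm_smul, hc, one_mul, hx]
  have hyz : ‖y - z‖ ^ 2 = 2 * (r ^ 2 - t) := by
    rw [norm_sub_sq (𝕜 := 𝕜), ← inner_conj_symm, hzy, RCLike.conj_ofReal, RCLike.ofReal_re, hy]
    ring
  have hdiff := re_inner_map_self_sub_le T y z
  rw [inner_smul_map_smul_self hc, hy] at hdiff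
  have hcs : t ≤ r ^ 2 := by
    simpa [t, hx, sq] using norm_inner_le_norm (𝕜 := 𝕜) z x
  set d := ‖y - z‖
  have hd : 0 ≤ d := norm_nonneg _
  have hT : 0 ≤ ‖T‖ := norm_nonneg _
  rw [← hyz, Real.sqrt_sq hd]
  rcases (show 0 ≤ r from norm_nonneg z).eq_or_lt with hr | hr
  · rw [← hr, div_zero]
    nlinarith [norm_nonneg ⟪z, x⟫_𝕜]
  rw [le_div_iff₀ hr]
  have hsq : (d * r) ^ 2 ≤ 4 * ‖T‖ * (d * r) := by
    nlinarith [norm_nonneg ⟪z, x⟫_𝕜]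
  nlinarith

end InnerProductSpace

section Matrix

variable {𝕜 ι : Type*} [RCLike 𝕜] [Fintype ι]

theorem star_dotProduct_eq_inner_toLp (u v : ι → 𝕜) :
    star u ⬝ᵥ v = ⟪toLp 2 u, toLp 2 v⟫_𝕜 :=
  dotProduct_comm _ _

theorem star_dotProduct_mulVec_eq_inner_toEuclideanCLM [DecidableEq ι] (A : Matrix ι ι 𝕜)
    (u v : ι → 𝕜) :
    star u ⬝ᵥ A *ᵥ v = ⟪toLp 2 u, toEuclideanCLM (n := ι) (𝕜 := 𝕜) A (toLp 2 v)⟫_𝕜 := by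
  rw [toEuclideanCLM_toLp, star_dotProduct_eq_inner_toLp]

theorem re_star_dotProduct_vecMulVec_add_mulVec_self (z v : ι → 𝕜) (A : Matrix ι ι 𝕜) :
    re (star v ⬝ᵥ (vecMulVec z (star z) + A) *ᵥ v)
      = ‖star z ⬝ᵥ v‖ ^ 2 + re (star v ⬝ᵥ A *ᵥ v) := by
  rw [add_mulVec, dotProduct_add, map_add, vecMulVec_mulVec, op_smul_eq_smul, dotProduct_smul,
    smul_eq_mul, star_dotProduct, RCLike.star_def, RCLike.conj_mul, ← RCLike.ofReal_pow,
    RCLike.ofReal_re, RCLike.norm_conj]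

end Matrix

theorem stmt0_general {n : ℕ} (z x : Fin n → ℂ) (Δ : Matrix (Fin n) (Fin n) ℂ)
    (hz : ∀ i, ‖z i‖ = 1)
    (C : Matrix (Fin n) (Fin n) ℂ) (hC : C = Matrix.vecMulVec z (star z) + Δ)
    (hx : ∑ i, ‖x i‖ ^ 2 = n)
    (hopt : (star z ⬝ᵥ C.mulVec z).re ≤ (star x ⬝ᵥ C.mulVec x).re) :
    Real.sqrt (2 * (n - ‖star z ⬝ᵥ x‖)) ≤ 4 * ‖Δ‖ / Real.sqrt n := by
  have hZ : ‖toLp 2 z‖ = √n := by simp [EuclideanSpace.norm_eq, hz]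
  have hX : ‖toLp 2 x‖ = √n := by simp [EuclideanSpace.norm_eq, hx]
  have hzz : ‖star z ⬝ᵥ z‖ ^ 2 = ‖toLp 2 z‖ ^ 4 := by
    rw [star_dotProduct_eq_inner_toLp, inner_self_eq_norm_sq_to_K, norm_pow, RCLike.norm_ofReal,
      abs_norm]
    ring
  rw [← RCLike.re_to_complex, ← RCLike.re_to_complex, hC,
    re_star_dotProduct_vecMulVec_add_mulVec_self, re_star_dotProduct_vecMulVec_add_mulVec_self,
    hzz, star_dotProduct_mulVec_eq_inner_toEuclideanCLM,
    star_dotProduct_mulVec_eq_inner_toEuclideanCLM, star_dotProduct_eq_inner_toLp] at hopt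
  have key := sqrt_two_mul_sub_norm_inner_le_of_re_inner_le (hX.trans hZ.symm) hopt
  rwa [hZ, Real.sq_sqrt n.cast_nonneg, ← cstar_norm_def, ← star_dotProduct_eq_inner_toLp] at key

theorem stmt0 {n : ℕ} (z x : Fin n → ℂ) (Δ : Matrix (Fin n) (Fin n) ℂ)
    (hΔ : Δ.IsHermitian) (hz : ∀ i, ‖z i‖ = 1)
    (C : Matrix (Fin n) (Fin n) ℂ) (hC : C = Matrix.vecMulVec z (star z) + Δ)
    (hx : ∑ i, ‖x i‖ ^ 2 = n)
    (hopt : (star z ⬝ᵥ C.mulVec z).re ≤ (star x ⬝ᵥ C.mulVec x).re) :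
    Real.sqrt (2 * (n - ‖star z ⬝ᵥ x‖)) ≤ 4 * ‖Δ‖ / Real.sqrt n :=
  stmt0_general z x Δ hz C hC hx hopt
end
end

section
/- Let x_opt be a global maximizer of f(x) = x*Cx over ℂⁿ₁. Then for any x ∈ ℂⁿ₁, 0 ≤ f(x_opt) − f(x) ≤ −n·λ_min(S(x)). In particular, if S(x) is positive semidefinite, then x is a global maximizer. -/
/-! For unimodular `y`, the diagonal part of `S(x)` contributes `y* ddiag(·) y = tr Re ddiag(C x x*) =
f(x)`, so `y* S(x) y = f(x) - f(y)`. Taking `y = x_opt`, the Rayleigh bound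
`y* S y ≥ λ_min ‖y‖² = n λ_min` gives the estimate; taking `S(x) ⪰ 0` gives `f(y) ≤ f(x)` for all `y`. -/

open Matrix Complex
open scoped ComplexOrder

noncomputable section

/-- `S(x) = Re{ddiag(C x x*)} − C`. -/
def Smat {n : ℕ} (C : Matrix (Fin n) (Fin n) ℂ) (x : Fin n → ℂ) : Matrix (Fin n) (Fin n) ℂ :=
  Matrix.diagonal (fun i => ((C.mulVec x i * (starRingEnd ℂ) (x i)).re : ℂ)) - C

namespace Matrix

variable {𝕜 ι : Type*} [RCLike 𝕜] [Fintype ι] [DecidableEq ι]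

open scoped MatrixOrder in
theorem IsHermitian.posSemidef_sub_algebraMap_iInf_eigenvalues {A : Matrix ι ι 𝕜}
    (hA : A.IsHermitian) : (A - algebraMap ℝ _ (⨅ i, hA.eigenvalues i)).PosSemidef := by
  rw [← le_iff, algebraMap_le_iff_le_spectrum hA.isSelfAdjoint,
    hA.spectrum_real_eq_range_eigenvalues]
  rintro _ ⟨i, rfl⟩
  exact ciInf_le (Finite.bddBelow_range _) i

theorem IsHermitian.iInf_eigenvalues_mul_le {A : Matrix ι ι 𝕜} (hA : A.IsHermitian)
    (y : ι → 𝕜) :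
    (⨅ i, hA.eigenvalues i) * RCLike.re (star y ⬝ᵥ y) ≤ RCLike.re (star y ⬝ᵥ A *ᵥ y) := by
  have h := hA.posSemidef_sub_algebraMap_iInf_eigenvalues.re_dotProduct_nonneg y
  rwa [sub_mulVec, dotProduct_sub, map_sub, sub_nonneg, Algebra.algebraMap_eq_smul_one,
    smul_mulVec, one_mulVec, dotProduct_smul, RCLike.smul_re] at h

end Matrix

theorem star_dotProduct_self_of_norm_eq_one {𝕜 ι : Type*} [RCLike 𝕜] [Fintype ι] {y : ι → 𝕜}
    (hy : ∀ i, ‖y i‖ = 1) : star y ⬝ᵥ y = Fintype.card ι := by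
  simp [dotProduct, RCLike.conj_mul, hy]

theorem star_dotProduct_diagonal_mulVec_of_norm_eq_one {𝕜 ι : Type*} [RCLike 𝕜] [Fintype ι]
    [DecidableEq ι] (d : ι → 𝕜) {y : ι → 𝕜} (hy : ∀ i, ‖y i‖ = 1) :
    star y ⬝ᵥ diagonal d *ᵥ y = ∑ i, d i := by
  refine Finset.sum_congr rfl fun i _ => ?_
  rw [mulVec_diagonal, Pi.star_apply, RCLike.star_def, mul_left_comm, RCLike.conj_mul, hy]
  simp

theorem re_star_dotProduct_Smat_mulVec {n : ℕ} (C : Matrix (Fin n) (Fin n) ℂ) (x : Fin n → ℂ)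
    {y : Fin n → ℂ} (hy : ∀ i, ‖y i‖ = 1) :
    (star y ⬝ᵥ Smat C x *ᵥ y).re = (star x ⬝ᵥ C *ᵥ x).re - (star y ⬝ᵥ C *ᵥ y).re := by
  rw [Smat, sub_mulVec, dotProduct_sub, sub_re,
    star_dotProduct_diagonal_mulVec_of_norm_eq_one _ hy, re_sum]
  congr 1
  rw [dotProduct, re_sum]
  simp only [Pi.star_apply, RCLike.star_def, mul_comm, ofReal_re]

theorem stmt2_general {n : ℕ} (C : Matrix (Fin n) (Fin n) ℂ)
    (xopt : Fin n → ℂ) (hxopt : ∀ i, ‖xopt i‖ = 1)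
    (hglob : ∀ y : Fin n → ℂ, (∀ i, ‖y i‖ = 1) →
      (star y ⬝ᵥ C.mulVec y).re ≤ (star xopt ⬝ᵥ C.mulVec xopt).re)
    (x : Fin n → ℂ) (hx : ∀ i, ‖x i‖ = 1)
    (hS : (Smat C x).IsHermitian) :
    (0 ≤ (star xopt ⬝ᵥ C.mulVec xopt).re - (star x ⬝ᵥ C.mulVec x).re ∧
      (star xopt ⬝ᵥ C.mulVec xopt).re - (star x ⬝ᵥ C.mulVec x).re
        ≤ -((n : ℝ) * ⨅ i, hS.eigenvalues i)) ∧
    ((Smat C x).PosSemidef → ∀ y : Fin n → ℂ, (∀ i, ‖y i‖ = 1) →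
      (star y ⬝ᵥ C.mulVec y).re ≤ (star x ⬝ᵥ C.mulVec x).re) := by
  refine ⟨⟨sub_nonneg.mpr (hglob x hx), ?_⟩, fun hpsd y hy => ?_⟩
  · have h := hS.iInf_eigenvalues_mul_le xopt
    simp only [star_dotProduct_self_of_norm_eq_one hxopt, RCLike.re_to_complex,
      re_star_dotProduct_Smat_mulVec C x hxopt, Fintype.card_fin, natCast_re] at h
    linarith
  · have h := hpsd.re_dotProduct_nonneg y
    rw [RCLike.re_to_complex, re_star_dotProduct_Smat_mulVec C x hy] at h
    linarith

theorem stmt2 {n : ℕ} (C : Matrix (Fin n) (Fin n) ℂ) (hC : C.IsHermitian)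
    (xopt : Fin n → ℂ) (hxopt : ∀ i, ‖xopt i‖ = 1)
    (hglob : ∀ y : Fin n → ℂ, (∀ i, ‖y i‖ = 1) →
      (star y ⬝ᵥ C.mulVec y).re ≤ (star xopt ⬝ᵥ C.mulVec xopt).re)
    (x : Fin n → ℂ) (hx : ∀ i, ‖x i‖ = 1)
    (hS : (Smat C x).IsHermitian) :
    (0 ≤ (star xopt ⬝ᵥ C.mulVec xopt).re - (star x ⬝ᵥ C.mulVec x).re ∧
      (star xopt ⬝ᵥ C.mulVec xopt).re - (star x ⬝ᵥ C.mulVec x).re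
        ≤ -((n : ℝ) * ⨅ i, hS.eigenvalues i)) ∧
    ((Smat C x).PosSemidef → ∀ y : Fin n → ℂ, (∀ i, ‖y i‖ = 1) →
      (star y ⬝ᵥ C.mulVec y).re ≤ (star x ⬝ᵥ C.mulVec x).re) :=
  stmt2_general C xopt hxopt hglob x hx hS
end
end

section
/- If x ∈ ℂⁿ₁ satisfies S(x) ⪰ 0 and rank(S(x)) = n − 1, then the global maximizer of f(x) = x*Cx over ℂⁿ₁ is unique up to a global phase, and equals x up to phase. -/
open Matrix Complex
open scoped ComplexOrder

noncomputable section

/-! For unimodular `w` the diagonal of `S(x)` contributes the constant `f(x) = x*Cx` to `w*S(x)w`,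
so `w*S(x)w = f(x) - f(w)`. Hence `S(x) ⪰ 0` makes `x` a global maximizer, and any other maximizer
`y` has `y*S(x)y = 0`, i.e. `S(x)y = 0`. Rank `n - 1` makes the kernel of `S(x)` the line through
`x`, so `y = c x`, and `|c| = 1` because both vectors are unimodular. -/

theorem Matrix.exists_smul_eq_of_rank_eq_card_sub_one {K m ι : Type*} [Field K] [Fintype ι]
    (A : Matrix m ι K) (hA : A.rank = Fintype.card ι - 1) {x y : ι → K} (hx0 : x ≠ 0)
    (hx : A *ᵥ x = 0) (hy : A *ᵥ y = 0) : ∃ c : K, c • x = y := by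
  obtain ⟨i, -⟩ := Function.ne_iff.mp hx0
  have hcard : 0 < Fintype.card ι := Fintype.card_pos_iff.mpr ⟨i⟩
  have hker : Module.finrank K (LinearMap.ker A.mulVecLin) = 1 := by
    have := LinearMap.finrank_range_add_finrank_ker A.mulVecLin
    rw [Module.finrank_fintype_fun_eq_card] at this
    change A.rank + _ = _ at this
    omega
  obtain ⟨c, hc⟩ := (finrank_eq_one_iff_of_nonzero' (⟨x, hx⟩ : LinearMap.ker A.mulVecLin)
    fun h => hx0 (congrArg Subtype.val h)).mp hker ⟨y, hy⟩
  exact ⟨c, congrArg Subtype.val hc⟩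

theorem Complex.exists_phase_of_smul_eq {ι : Type*} {x y : ι → ℂ} (hx : ∀ i, ‖x i‖ = 1)
    (hy : ∀ i, ‖y i‖ = 1) {c : ℂ} (hc : c • x = y) :
    ∃ θ : ℝ, ∀ i, y i = x i * exp (θ * I) := by
  cases isEmpty_or_nonempty ι with
  | inl _ => exact ⟨0, isEmptyElim⟩
  | inr hι =>
    obtain ⟨i₀⟩ := hι
    have hc1 : ‖c‖ = 1 := by
      simpa [← hc, hx i₀] using hy i₀
    refine ⟨arg c, fun i => ?_⟩
    rw [← hc, Pi.smul_apply, smul_eq_mul, mul_comm]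
    conv_lhs => rw [← norm_mul_exp_arg_mul_I c, hc1]
    simp

theorem star_dotProduct_Smat_mulVec {n : ℕ} (C : Matrix (Fin n) (Fin n) ℂ) (x : Fin n → ℂ)
    {w : Fin n → ℂ} (hw : ∀ i, ‖w i‖ = 1) :
    star w ⬝ᵥ Smat C x *ᵥ w = ((star x ⬝ᵥ C *ᵥ x).re : ℂ) - star w ⬝ᵥ C *ᵥ w := by
  have hdiag : star w ⬝ᵥ diagonal (fun i => (((C *ᵥ x) i * (starRingEnd ℂ) (x i)).re : ℂ)) *ᵥ w
      = ((star x ⬝ᵥ C *ᵥ x).re : ℂ) := by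
    have hunit : ∀ i, star (w i) * w i = 1 := fun i => by
      rw [star_def, conj_mul', hw i]; simp
    simp only [dotProduct, mulVec_diagonal, Pi.star_apply, re_sum]
    push_cast
    refine Finset.sum_congr rfl fun i _ => ?_
    rw [mul_left_comm, hunit, mul_one, mul_comm, star_def]
  rw [Smat, sub_mulVec, dotProduct_sub, hdiag]

variable {n : ℕ} {C : Matrix (Fin n) (Fin n) ℂ} {x : Fin n → ℂ}

theorem re_quadForm_le_of_Smat_posSemidef (hpsd : (Smat C x).PosSemidef) {w : Fin n → ℂ}
    (hw : ∀ i, ‖w i‖ = 1) : (star w ⬝ᵥ C *ᵥ w).re ≤ (star x ⬝ᵥ C *ᵥ x).re := by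
  have h := (le_def.mp (hpsd.dotProduct_mulVec_nonneg w)).1
  rw [star_dotProduct_Smat_mulVec C x hw] at h
  simpa using h

theorem Smat_mulVec_eq_zero_of_re_quadForm_eq (hpsd : (Smat C x).PosSemidef)
    {w : Fin n → ℂ} (hw : ∀ i, ‖w i‖ = 1)
    (heq : (star w ⬝ᵥ C *ᵥ w).re = (star x ⬝ᵥ C *ᵥ x).re) : Smat C x *ᵥ w = 0 := by
  refine (hpsd.dotProduct_mulVec_zero_iff w).mp ?_
  have him := (le_def.mp (hpsd.dotProduct_mulVec_nonneg w)).2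
  rw [star_dotProduct_Smat_mulVec C x hw] at him ⊢
  apply Complex.ext
  · simp [heq]
  · simpa using him.symm

theorem stmt3_general {n : ℕ} (C : Matrix (Fin n) (Fin n) ℂ)
    (x : Fin n → ℂ) (hx : ∀ i, ‖x i‖ = 1)
    (hpsd : (Smat C x).PosSemidef) (hrank : (Smat C x).rank = n - 1) :
    (∀ w : Fin n → ℂ, (∀ i, ‖w i‖ = 1) →
      (star w ⬝ᵥ C.mulVec w).re ≤ (star x ⬝ᵥ C.mulVec x).re) ∧
    (∀ y : Fin n → ℂ, (∀ i, ‖y i‖ = 1) →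
      (∀ w : Fin n → ℂ, (∀ i, ‖w i‖ = 1) →
        (star w ⬝ᵥ C.mulVec w).re ≤ (star y ⬝ᵥ C.mulVec y).re) →
      ∃ θ : ℝ, ∀ i, y i = x i * Complex.exp (θ * Complex.I)) := by
  refine ⟨fun w hw => re_quadForm_le_of_Smat_posSemidef hpsd hw, fun y hy hymax => ?_⟩
  have hSy : Smat C x *ᵥ y = 0 := Smat_mulVec_eq_zero_of_re_quadForm_eq hpsd hy
    (le_antisymm (re_quadForm_le_of_Smat_posSemidef hpsd hy) (hymax x hx))
  rcases isEmpty_or_nonempty (Fin n) with hn | ⟨⟨i₀⟩⟩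
  · exact ⟨0, isEmptyElim⟩
  have hx0 : x ≠ 0 := fun h => by simpa [h] using hx i₀
  have hSx : Smat C x *ᵥ x = 0 := Smat_mulVec_eq_zero_of_re_quadForm_eq hpsd hx rfl
  obtain ⟨c, hc⟩ := (Smat C x).exists_smul_eq_of_rank_eq_card_sub_one
    (by rwa [Fintype.card_fin]) hx0 hSx hSy
  exact exists_phase_of_smul_eq hx hy hc

theorem stmt3 {n : ℕ} (C : Matrix (Fin n) (Fin n) ℂ) (hC : C.IsHermitian)
    (x : Fin n → ℂ) (hx : ∀ i, ‖x i‖ = 1)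
    (hpsd : (Smat C x).PosSemidef) (hrank : (Smat C x).rank = n - 1) :
    (∀ w : Fin n → ℂ, (∀ i, ‖w i‖ = 1) →
      (star w ⬝ᵥ C.mulVec w).re ≤ (star x ⬝ᵥ C.mulVec x).re) ∧
    (∀ y : Fin n → ℂ, (∀ i, ‖y i‖ = 1) →
      (∀ w : Fin n → ℂ, (∀ i, ‖w i‖ = 1) →
        (star w ⬝ᵥ C.mulVec w).re ≤ (star y ⬝ᵥ C.mulVec y).re) →
      ∃ θ : ℝ, ∀ i, y i = x i * Complex.exp (θ * Complex.I)) :=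
  stmt3_general C x hx hpsd hrank
end
end

section
/- Let z ∈ ℂⁿ₁ and v ∈ ℂⁿ, and let v̂ ∈ ℂⁿ₁ be defined by v̂_i = v_i/|v_i| when v_i ≠ 0 and v̂_i an arbitrary unit complex number otherwise. Then ‖v̂ − z‖₂ ≤ 2‖v − z‖₂. -/
/-- `a = ‖a‖ • u` says that `u` is a direction of `a`; for `a = 0` every unit vector `u` is. -/
lemma norm_sub_le_two_mul_norm_sub_of_eq_norm_smul {E : Type*} [NormedAddCommGroup E]
    [NormedSpace ℝ E] {a b u : E} (hb : ‖b‖ = 1) (hu : ‖u‖ = 1) (hau : a = ‖a‖ • u) :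
    ‖u - b‖ ≤ 2 * ‖a - b‖ := by
  have hua : ‖u - a‖ ≤ ‖a - b‖ :=
    calc ‖u - a‖ = |‖b‖ - ‖a‖| := by
          rw [hb, norm_sub_rev]
          nth_rw 1 [hau]
          rw [show ‖a‖ • u - u = (‖a‖ - 1) • u by rw [sub_smul, one_smul], norm_smul, hu,
            mul_one, Real.norm_eq_abs, abs_sub_comm]
      _ ≤ ‖a - b‖ := (abs_norm_sub_norm_le b a).trans_eq (norm_sub_rev b a)
  calc ‖u - b‖ ≤ ‖u - a‖ + ‖a - b‖ := norm_sub_le_norm_sub_add_norm_sub u a b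
    _ ≤ 2 * ‖a - b‖ := by linarith

lemma Real.sqrt_sum_sq_le_mul_sqrt_sum_sq {ι : Type*} (s : Finset ι) {f g : ι → ℝ} {c : ℝ}
    (hc : 0 ≤ c) (hf : ∀ i ∈ s, 0 ≤ f i) (hfg : ∀ i ∈ s, f i ≤ c * g i) :
    √(∑ i ∈ s, f i ^ 2) ≤ c * √(∑ i ∈ s, g i ^ 2) := by
  rw [← Real.sqrt_sq hc, ← Real.sqrt_mul (sq_nonneg c), Finset.mul_sum]
  refine Real.sqrt_le_sqrt (Finset.sum_le_sum fun i hi => ?_)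
  rw [← mul_pow]
  exact pow_le_pow_left₀ (hf i hi) (hfg i hi) 2

theorem stmt4 {n : ℕ} (z v vh : Fin n → ℂ)
    (hz : ∀ i, ‖z i‖ = 1) (hvh : ∀ i, ‖vh i‖ = 1)
    (hproj : ∀ i, v i ≠ 0 → vh i = v i / (‖v i‖ : ℂ)) :
    Real.sqrt (∑ i, ‖vh i - z i‖ ^ 2)
      ≤ 2 * Real.sqrt (∑ i, ‖v i - z i‖ ^ 2) := by
  have hdir : ∀ i, v i = ‖v i‖ • vh i := fun i => by
    by_cases hv : v i = 0
    · simp [hv]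
    · rw [hproj i hv, Complex.real_smul, mul_div_cancel₀ _ (by simpa using hv)]
  refine Real.sqrt_sum_sq_le_mul_sqrt_sum_sq _ zero_le_two (fun i _ => norm_nonneg _)
    fun i _ => norm_sub_le_two_mul_norm_sub_of_eq_norm_smul (hz i) (hvh i) (hdir i)
end

section
/- For x ∈ ℂⁿ₁ and a Hermitian matrix M with M x having entries (Mx)_i, the following are equivalent: (a) for all i with (Mx)_i ≠ 0, x_i = (Mx)_i/|(Mx)_i|; (b) for all i, (Mx)_i · conj(x_i) = |(Mx)_i|; (c) x*Mx = ‖Mx‖₁. -/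
open Matrix Complex ComplexConjugate

namespace Complex

theorem ne_zero_imp_eq_div_norm_iff_mul_conj_eq_norm {z w : ℂ} (hw : ‖w‖ = 1) :
    (z ≠ 0 → w = z / ‖z‖) ↔ z * conj w = ‖z‖ := by
  rcases eq_or_ne z 0 with rfl | hz
  · simp
  have hw0 : w ≠ 0 := norm_ne_zero_iff.1 (hw ▸ one_ne_zero)
  have hnorm : (‖z‖ : ℂ) ≠ 0 := ofReal_ne_zero.2 (norm_ne_zero_iff.2 hz)
  rw [← inv_eq_conj hw, mul_inv_eq_iff_eq_mul₀ hw0, eq_div_iff hnorm, mul_comm, eq_comm]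
  simp [hz]

theorem sum_eq_sum_norm_iff {ι : Type*} (s : Finset ι) (z : ι → ℂ) :
    ∑ i ∈ s, z i = ((∑ i ∈ s, ‖z i‖ : ℝ) : ℂ) ↔ ∀ i ∈ s, z i = ‖z i‖ := by
  refine ⟨fun h i hi => ?_, fun h => by push_cast; exact Finset.sum_congr rfl h⟩
  have hre : ∑ i ∈ s, (z i).re = ∑ i ∈ s, ‖z i‖ := by
    simpa only [re_sum, ofReal_re] using congrArg re h
  -- each real part is at most the norm, so equality of the sums forces equality termwise
  have hle : ∀ j ∈ s, (z j).re ≤ ‖z j‖ := fun j _ => re_le_norm (z j)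
  exact eq_coe_norm_of_nonneg (re_eq_norm.1 ((Finset.sum_eq_sum_iff_of_le hle).1 hre i hi))

end Complex

theorem stmt8_general {n : ℕ} (M : Matrix (Fin n) (Fin n) ℂ)
    (x : Fin n → ℂ) (hx : ∀ i, ‖x i‖ = 1) :
    ((∀ i, M.mulVec x i ≠ 0 → x i = M.mulVec x i / (‖M.mulVec x i‖ : ℂ)) ↔
      (∀ i, M.mulVec x i * (starRingEnd ℂ) (x i) = (‖M.mulVec x i‖ : ℂ)))
    ∧ ((∀ i, M.mulVec x i * (starRingEnd ℂ) (x i) = (‖M.mulVec x i‖ : ℂ)) ↔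
      star x ⬝ᵥ M.mulVec x = ((∑ i, ‖M.mulVec x i‖ : ℝ) : ℂ)) := by
  set y := M.mulVec x
  have hterm : ∀ i, ‖y i * conj (x i)‖ = ‖y i‖ := by simp [hx]
  refine ⟨forall_congr' fun i => ne_zero_imp_eq_div_norm_iff_mul_conj_eq_norm (hx i), ?_⟩
  have hsum : ∑ i, ‖y i‖ = ∑ i, ‖y i * conj (x i)‖ := by simp only [hterm]
  rw [dotProduct_comm, hsum]
  simp only [dotProduct, Pi.star_apply, star_def]
  rw [sum_eq_sum_norm_iff]
  simp only [Finset.mem_univ, true_imp_iff, hterm]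

theorem stmt8 {n : ℕ} (M : Matrix (Fin n) (Fin n) ℂ) (hM : M.IsHermitian)
    (x : Fin n → ℂ) (hx : ∀ i, ‖x i‖ = 1) :
    ((∀ i, M.mulVec x i ≠ 0 → x i = M.mulVec x i / (‖M.mulVec x i‖ : ℂ)) ↔
      (∀ i, M.mulVec x i * (starRingEnd ℂ) (x i) = (‖M.mulVec x i‖ : ℂ)))
    ∧ ((∀ i, M.mulVec x i * (starRingEnd ℂ) (x i) = (‖M.mulVec x i‖ : ℂ)) ↔
      star x ⬝ᵥ M.mulVec x = ((∑ i, ‖M.mulVec x i‖ : ℝ) : ℂ)) :=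
  stmt8_general M x hx
end

section
/- For any x ∈ ℂⁿ₁ and positive semidefinite Hermitian M, with y = T(x) the entrywise phase normalization of Mx (keeping x_i where (Mx)_i = 0), one has y*My ≥ ‖Mx‖₁ ≥ x*Mx, with equality y*My = x*Mx only if y = x. -/
/-!
With z = Mx, the choice of y makes y*z = ‖z‖₁, while |x_i| = 1 gives Re(x*z) ≤ ‖z‖₁ termwise.
Expanding (y - x)*M(y - x) ≥ 0 yields y*My + x*Mx ≥ 2 Re(y*z) = 2‖z‖₁, which gives both
inequalities. If y*My = x*Mx, then Re(x*z) = ‖z‖₁, so every term conj(x_i) z_i is the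
nonnegative real |z_i|, i.e. x_i is the phase of z_i wherever z_i ≠ 0.
-/

open Matrix Complex
open scoped ComplexOrder

noncomputable section

open ComplexConjugate

namespace Complex

lemma conj_div_norm_mul_self (z : ℂ) : conj (z / ‖z‖) * z = ‖z‖ := by
  rcases eq_or_ne z 0 with rfl | hz
  · simp
  rw [map_div₀, conj_ofReal, div_mul_eq_mul_div, mul_comm, mul_conj, normSq_eq_norm_sq]
  push_cast
  field_simp [ofReal_ne_zero.mpr (norm_ne_zero_iff.mpr hz)]

lemma re_conj_mul_le_norm {u : ℂ} (hu : ‖u‖ = 1) (z : ℂ) : (conj u * z).re ≤ ‖z‖ := by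
  simpa [hu] using re_le_norm (conj u * z)

lemma div_norm_eq_of_re_conj_mul_eq_norm {u z : ℂ} (hu : ‖u‖ = 1) (hz : z ≠ 0)
    (h : (conj u * z).re = ‖z‖) : z / ‖z‖ = u := by
  have hnonneg : 0 ≤ conj u * z := re_eq_norm.mp (by simpa [hu] using h)
  have hreal : conj u * z = ‖z‖ := by simpa [hu] using eq_coe_norm_of_nonneg hnonneg
  have hunit : u * conj u = 1 := by rw [mul_conj, normSq_eq_norm_sq, hu]; norm_num
  rw [div_eq_iff (ofReal_ne_zero.mpr (norm_ne_zero_iff.mpr hz)), ← hreal, ← mul_assoc, hunit,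
    one_mul]

end Complex

namespace Matrix

variable {ι 𝕜 : Type*} [Fintype ι] [RCLike 𝕜]

lemma PosSemidef.two_mul_re_dotProduct_mulVec_le {M : Matrix ι ι 𝕜} (hM : M.PosSemidef)
    (x y : ι → 𝕜) :
    2 * RCLike.re (star y ⬝ᵥ M *ᵥ x) ≤
      RCLike.re (star x ⬝ᵥ M *ᵥ x) + RCLike.re (star y ⬝ᵥ M *ᵥ y) := by
  have hsymm : RCLike.re (star x ⬝ᵥ M *ᵥ y) = RCLike.re (star y ⬝ᵥ M *ᵥ x) := by
    rw [star_dotProduct, star_mulVec, hM.isHermitian.eq, ← dotProduct_mulVec, RCLike.star_def,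
      RCLike.conj_re]
  have h := hM.re_dotProduct_nonneg (y - x)
  simp only [star_sub, mulVec_sub, sub_dotProduct, dotProduct_sub, map_sub] at h
  linarith

lemma star_dotProduct_eq_sum_norm {y z : ι → ℂ} (hy : ∀ i, z i ≠ 0 → y i = z i / ‖z i‖) :
    star y ⬝ᵥ z = ((∑ i, ‖z i‖ : ℝ) : ℂ) := by
  push_cast
  refine Finset.sum_congr rfl fun i _ => ?_
  rcases eq_or_ne (z i) 0 with hzi | hzi
  · simp [hzi]
  · rw [Pi.star_apply, hy i hzi]
    exact conj_div_norm_mul_self (z i)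

lemma re_star_dotProduct_le_sum_norm {x : ι → ℂ} (hx : ∀ i, ‖x i‖ = 1) (z : ι → ℂ) :
    (star x ⬝ᵥ z).re ≤ ∑ i, ‖z i‖ := by
  rw [dotProduct, re_sum]
  exact Finset.sum_le_sum fun i _ => re_conj_mul_le_norm (hx i) (z i)

lemma div_norm_eq_of_re_star_dotProduct_eq_sum_norm {x z : ι → ℂ} (hx : ∀ i, ‖x i‖ = 1)
    (h : (star x ⬝ᵥ z).re = ∑ i, ‖z i‖) {i : ι} (hzi : z i ≠ 0) : z i / ‖z i‖ = x i := by
  rw [dotProduct, re_sum] at h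
  have hterms := (Finset.sum_eq_sum_iff_of_le fun j _ => re_conj_mul_le_norm (hx j) (z j)).mp h
  exact div_norm_eq_of_re_conj_mul_eq_norm (hx i) hzi (hterms i (Finset.mem_univ i))

end Matrix

theorem stmt9 {n : ℕ} (M : Matrix (Fin n) (Fin n) ℂ) (hM : M.PosSemidef)
    (x y : Fin n → ℂ) (hx : ∀ i, ‖x i‖ = 1)
    (hy1 : ∀ i, M.mulVec x i ≠ 0 → y i = M.mulVec x i / (‖M.mulVec x i‖ : ℂ))
    (hy2 : ∀ i, M.mulVec x i = 0 → y i = x i) :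
    (∑ i, ‖M.mulVec x i‖) ≤ (star y ⬝ᵥ M.mulVec y).re ∧
    (star x ⬝ᵥ M.mulVec x).re ≤ (∑ i, ‖M.mulVec x i‖) ∧
    ((star y ⬝ᵥ M.mulVec y).re = (star x ⬝ᵥ M.mulVec x).re → y = x) := by
  have hyx : (star y ⬝ᵥ M *ᵥ x).re = ∑ i, ‖(M *ᵥ x) i‖ := by
    rw [star_dotProduct_eq_sum_norm hy1, ofReal_re]
  have hxx := re_star_dotProduct_le_sum_norm hx (M *ᵥ x)
  have hpsd := hM.two_mul_re_dotProduct_mulVec_le x y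
  simp only [RCLike.re_to_complex] at hpsd
  refine ⟨by linarith, hxx, fun heq => funext fun i => ?_⟩
  rcases eq_or_ne ((M *ᵥ x) i) 0 with hzi | hzi
  · exact hy2 i hzi
  · rw [hy1 i hzi]
    exact div_norm_eq_of_re_star_dotProduct_eq_sum_norm hx (by linarith) hzi
end
end

section
/- If x ∈ ℂⁿ₁ satisfies x*(C + αI)x = ‖(C + αI)x‖₁ (a fixed point of the generalized power method with shift α ≥ 0), where C = zz* + Δ, then |z*x| ≥ n − 4(‖Δ‖_op + α) or |z*x| ≤ 4(‖Δ‖_op + α). If ‖Δ‖_op + α < n/8, exactly one of these holds. -/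
open scoped Matrix.Norms.L2Operator
open Matrix Complex

noncomputable section

/-!
Write `s = z*x` and `v = (Δ + αI)x`, so that `(C + αI)x = s z + v` with `‖v‖₁ ≤ (‖Δ‖ + α) n`
because `‖·‖₁ ≤ √n ‖·‖₂` and `‖x‖₂ = √n`. Every entry of `s z + v` has modulus at least
`|s| - |v_i|`, so `‖(C + αI)x‖₁ ≥ n|s| - ‖v‖₁`, while `x*(s z + v) = |s|² + x*v` has real part at
most `|s|² + ‖v‖₁`. At a fixed point the two agree, which gives the quadratic inequality
`n|s| - 2δn ≤ |s|²` with `δ = ‖Δ‖ + α`; it excludes `4δ < |s| < n - 4δ`.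
-/

namespace Matrix

variable {ι 𝕜 : Type*} [Fintype ι] [RCLike 𝕜]

lemma sq_sum_norm_le_card_mul_norm_toLp_sq (w : ι → 𝕜) :
    (∑ i, ‖w i‖) ^ 2 ≤ Fintype.card ι * ‖WithLp.toLp 2 w‖ ^ 2 := by
  rw [EuclideanSpace.norm_sq_eq]
  exact sq_sum_le_card_mul_sum_sq

lemma norm_toLp_sq_of_forall_norm_eq_one {x : ι → 𝕜} (hx : ∀ i, ‖x i‖ = 1) :
    ‖WithLp.toLp 2 x‖ ^ 2 = Fintype.card ι := by
  simp [EuclideanSpace.norm_sq_eq, hx]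

lemma sum_norm_mulVec_le_l2_opNorm_mul_card [DecidableEq ι] (A : Matrix ι ι 𝕜) {x : ι → 𝕜}
    (hx : ∀ i, ‖x i‖ = 1) : ∑ i, ‖(A *ᵥ x) i‖ ≤ ‖A‖ * Fintype.card ι := by
  have hAx : ‖WithLp.toLp 2 (A *ᵥ x)‖ ≤ ‖A‖ * ‖WithLp.toLp 2 x‖ :=
    A.l2_opNorm_mulVec (WithLp.toLp 2 x)
  refine (pow_le_pow_iff_left₀ (by positivity) (by positivity) two_ne_zero).1 ?_
  calc (∑ i, ‖(A *ᵥ x) i‖) ^ 2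
      ≤ Fintype.card ι * ‖WithLp.toLp 2 (A *ᵥ x)‖ ^ 2 := sq_sum_norm_le_card_mul_norm_toLp_sq _
    _ ≤ Fintype.card ι * (‖A‖ * ‖WithLp.toLp 2 x‖) ^ 2 := by gcongr
    _ = (‖A‖ * Fintype.card ι) ^ 2 := by
      rw [mul_pow, norm_toLp_sq_of_forall_norm_eq_one hx]
      ring

lemma l2_opNorm_smul_one_le [DecidableEq ι] (c : 𝕜) : ‖c • (1 : Matrix ι ι 𝕜)‖ ≤ ‖c‖ := by
  rw [smul_one_eq_diagonal, l2_opNorm_diagonal]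
  exact (pi_norm_le_iff_of_nonneg (norm_nonneg c)).2 fun _ => le_rfl

lemma norm_star_dotProduct_le_sum_norm {x : ι → 𝕜} (hx : ∀ i, ‖x i‖ = 1) (v : ι → 𝕜) :
    ‖star x ⬝ᵥ v‖ ≤ ∑ i, ‖v i‖ :=
  (norm_sum_le _ _).trans_eq <| Finset.sum_congr rfl fun i _ => by
    rw [Pi.star_apply, norm_mul, norm_star, hx i, one_mul]

lemma card_mul_norm_sub_le_sum_norm_smul_add {z : ι → 𝕜} (hz : ∀ i, ‖z i‖ = 1) (s : 𝕜)
    (v : ι → 𝕜) : Fintype.card ι * ‖s‖ - ∑ i, ‖v i‖ ≤ ∑ i, ‖(s • z + v) i‖ := by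
  have hentry : ∀ i, ‖s‖ - ‖v i‖ ≤ ‖(s • z + v) i‖ := fun i => by
    have h := norm_sub_norm_le (s • z i) (-v i)
    rwa [norm_smul, hz i, mul_one, norm_neg, sub_neg_eq_add] at h
  calc Fintype.card ι * ‖s‖ - ∑ i, ‖v i‖ = ∑ i, (‖s‖ - ‖v i‖) := by
        rw [Finset.sum_sub_distrib, Finset.sum_const, nsmul_eq_mul, Finset.card_univ]
    _ ≤ ∑ i, ‖(s • z + v) i‖ := Finset.sum_le_sum fun i _ => hentry i

lemma re_star_dotProduct_smul_add_le (z : ι → 𝕜) {x : ι → 𝕜} (hx : ∀ i, ‖x i‖ = 1)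
    (v : ι → 𝕜) :
    RCLike.re (star x ⬝ᵥ ((star z ⬝ᵥ x) • z + v)) ≤ ‖star z ⬝ᵥ x‖ ^ 2 + ∑ i, ‖v i‖ := by
  set s := star z ⬝ᵥ x
  have hrank_one : star x ⬝ᵥ (s • z) = (‖s‖ ^ 2 : ℝ) := by
    rw [dotProduct_smul, star_dotProduct, smul_eq_mul, RCLike.star_def, RCLike.mul_conj]
    norm_cast
  rw [dotProduct_add, hrank_one, map_add, RCLike.ofReal_re]
  gcongr
  exact (RCLike.re_le_norm _).trans (norm_star_dotProduct_le_sum_norm hx v)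

end Matrix

lemma le_or_le_of_mul_sub_le_sq {n m δ : ℝ} (hδ : 0 ≤ δ) (h : n * m - 2 * δ * n ≤ m ^ 2) :
    n - 4 * δ ≤ m ∨ m ≤ 4 * δ := by
  by_contra! hm
  nlinarith [mul_pos (sub_pos.2 hm.2) (sub_pos.2 hm.1)]

theorem stmt10_general {n : ℕ} (z x : Fin n → ℂ) (Δ : Matrix (Fin n) (Fin n) ℂ)
    (α : ℝ) (hα : 0 ≤ α)
    (hz : ∀ i, ‖z i‖ = 1) (hx : ∀ i, ‖x i‖ = 1)
    (C : Matrix (Fin n) (Fin n) ℂ) (hC : C = Matrix.vecMulVec z (star z) + Δ)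
    (hfix : star x ⬝ᵥ (C + (α : ℂ) • 1).mulVec x
      = ((∑ i, ‖(C + (α : ℂ) • 1).mulVec x i‖ : ℝ) : ℂ)) :
    ((n : ℝ) - 4 * (‖Δ‖ + α) ≤ ‖star z ⬝ᵥ x‖ ∨
      ‖star z ⬝ᵥ x‖ ≤ 4 * (‖Δ‖ + α)) ∧
    (‖Δ‖ + α < (n : ℝ) / 8 →
      Xor' ((n : ℝ) - 4 * (‖Δ‖ + α) ≤ ‖star z ⬝ᵥ x‖)
        (‖star z ⬝ᵥ x‖ ≤ 4 * (‖Δ‖ + α))) := by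
  set s := star z ⬝ᵥ x
  set v := (Δ + (α : ℂ) • 1) *ᵥ x
  have hsplit : (C + (α : ℂ) • 1) *ᵥ x = s • z + v := by
    rw [hC, add_assoc, add_mulVec, vecMulVec_mulVec, op_smul_eq_smul]
  have hv : ∑ i, ‖v i‖ ≤ (‖Δ‖ + α) * n := by
    refine (sum_norm_mulVec_le_l2_opNorm_mul_card _ hx).trans ?_
    rw [Fintype.card_fin]
    gcongr
    refine (norm_add_le _ _).trans ?_
    gcongr
    exact (l2_opNorm_smul_one_le _).trans_eq (Complex.norm_of_nonneg hα)
  have hfix_re : ∑ i, ‖(s • z + v) i‖ = RCLike.re (star x ⬝ᵥ (s • z + v)) := by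
    rw [hsplit] at hfix
    rw [hfix, RCLike.re_to_complex, Complex.ofReal_re]
  have hlower := card_mul_norm_sub_le_sum_norm_smul_add hz s v
  have hupper := re_star_dotProduct_smul_add_le z hx v
  rw [Fintype.card_fin] at hlower
  have hdich := le_or_le_of_mul_sub_le_sq (by positivity : 0 ≤ ‖Δ‖ + α)
    (by linarith : (n : ℝ) * ‖s‖ - 2 * (‖Δ‖ + α) * n ≤ ‖s‖ ^ 2)
  exact ⟨hdich, fun hsmall => (xor_iff_or_and_not_and _ _).2
    ⟨hdich, fun ⟨hbig, hsmall'⟩ => by linarith⟩⟩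

theorem stmt10 {n : ℕ} (z x : Fin n → ℂ) (Δ : Matrix (Fin n) (Fin n) ℂ)
    (hΔ : Δ.IsHermitian) (α : ℝ) (hα : 0 ≤ α)
    (hz : ∀ i, ‖z i‖ = 1) (hx : ∀ i, ‖x i‖ = 1)
    (C : Matrix (Fin n) (Fin n) ℂ) (hC : C = Matrix.vecMulVec z (star z) + Δ)
    (hfix : star x ⬝ᵥ (C + (α : ℂ) • 1).mulVec x
      = ((∑ i, ‖(C + (α : ℂ) • 1).mulVec x i‖ : ℝ) : ℂ)) :
    ((n : ℝ) - 4 * (‖Δ‖ + α) ≤ ‖star z ⬝ᵥ x‖ ∨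
      ‖star z ⬝ᵥ x‖ ≤ 4 * (‖Δ‖ + α)) ∧
    (‖Δ‖ + α < (n : ℝ) / 8 →
      Xor' ((n : ℝ) - 4 * (‖Δ‖ + α) ≤ ‖star z ⬝ᵥ x‖)
        (‖star z ⬝ᵥ x‖ ≤ 4 * (‖Δ‖ + α))) :=
  stmt10_general z x Δ α hα hz hx C hC hfix
end
end

section
/- Let x ∈ ℂⁿ₁ with z*x = |z*x| ≥ n − 8‖Δ‖_op and (Cx)_i conj(x_i) = |(Cx)_i| for all i, where C = zz* + Δ + αI with 0 ≤ α ≤ ‖Δ‖_op. Then for any u ∈ ℂⁿ with u*x = 0, u*S u ≥ ‖u‖₂²(n − 27‖Δ‖_op − ‖Δx‖_∞), where S = ddiag(Cxx*) − C. -/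
open scoped Matrix.Norms.L2Operator
open Matrix Complex

/-! The quadratic form of `S = ddiag(C x x*) - C` at `u` is `∑ |(Cx)_i| |u_i|²` minus
`|z* u|² + u* Δ u + α ‖u‖²`. Each `|(Cx)_i|` is at least `|z* x| - ‖Δx‖_∞ - α`. Since `u ⊥ x`,
`z* u = (z - x)* u`, and because `z* x` is real, `‖z - x‖² = 2 (n - |z* x|) ≤ 16 ‖Δ‖`; finally
`u* Δ u ≤ ‖Δ‖ ‖u‖²` and `α ≤ ‖Δ‖`. -/

section QuadraticForms

variable {𝕜 ι : Type*} [RCLike 𝕜] [Fintype ι]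

theorem star_dotProduct_eq_inner (a b : ι → 𝕜) :
    star a ⬝ᵥ b = inner 𝕜 (WithLp.toLp 2 a) (WithLp.toLp 2 b) := by
  rw [EuclideanSpace.inner_toLp_toLp, dotProduct_comm]

theorem star_dotProduct_self_eq (u : ι → 𝕜) :
    star u ⬝ᵥ u = ((∑ i, ‖u i‖ ^ 2 : ℝ) : 𝕜) := by
  rw [star_dotProduct_eq_inner, inner_self_eq_norm_sq_to_K, ← EuclideanSpace.norm_sq_eq]
  push_cast; rfl

theorem norm_star_dotProduct_sq_le (a b : ι → 𝕜) :
    ‖star a ⬝ᵥ b‖ ^ 2 ≤ (∑ i, ‖a i‖ ^ 2) * ∑ i, ‖b i‖ ^ 2 := by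
  rw [star_dotProduct_eq_inner, ← EuclideanSpace.norm_sq_eq, ← EuclideanSpace.norm_sq_eq,
    ← mul_pow]
  gcongr
  exact norm_inner_le_norm _ _

theorem re_star_dotProduct_mulVec_le [DecidableEq ι] (A : Matrix ι ι 𝕜) (u : ι → 𝕜) :
    RCLike.re (star u ⬝ᵥ A *ᵥ u) ≤ ‖A‖ * ∑ i, ‖u i‖ ^ 2 := by
  rw [← EuclideanSpace.norm_sq_eq, star_dotProduct_eq_inner]
  set v : EuclideanSpace 𝕜 ι := WithLp.toLp 2 u
  calc RCLike.re (inner 𝕜 v (WithLp.toLp 2 (A *ᵥ u)))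
      ≤ ‖v‖ * ‖WithLp.toLp 2 (A *ᵥ u)‖ := (RCLike.re_le_norm _).trans (norm_inner_le_norm _ _)
    _ ≤ ‖v‖ * (‖A‖ * ‖v‖) := by gcongr; exact A.l2_opNorm_mulVec v
    _ = ‖A‖ * ‖v‖ ^ 2 := by ring

theorem sum_norm_sub_sq (a b : ι → 𝕜) :
    ∑ i, ‖a i - b i‖ ^ 2 = ∑ i, ‖a i‖ ^ 2 - 2 * RCLike.re (star a ⬝ᵥ b) + ∑ i, ‖b i‖ ^ 2 := by
  rw [star_dotProduct_eq_inner, ← EuclideanSpace.norm_sq_eq, ← EuclideanSpace.norm_sq_eq,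
    ← norm_sub_sq (𝕜 := 𝕜), ← WithLp.toLp_sub, EuclideanSpace.norm_sq_eq]
  rfl

theorem sum_norm_sq_of_norm_eq_one {a : ι → 𝕜} (ha : ∀ i, ‖a i‖ = 1) :
    ∑ i, ‖a i‖ ^ 2 = Fintype.card ι := by
  simp [ha]

theorem re_star_dotProduct_diagonal_mulVec [DecidableEq ι] (w : ι → ℝ) (u : ι → 𝕜) :
    RCLike.re (star u ⬝ᵥ diagonal (fun i => (w i : 𝕜)) *ᵥ u) = ∑ i, w i * ‖u i‖ ^ 2 := by
  simp only [dotProduct, mulVec_diagonal, map_sum, Pi.star_apply, RCLike.star_def]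
  refine Finset.sum_congr rfl fun i _ => ?_
  rw [mul_left_comm, RCLike.conj_mul, ← RCLike.ofReal_pow, ← RCLike.ofReal_mul, RCLike.ofReal_re]

theorem star_dotProduct_vecMulVec_mulVec (z u : ι → 𝕜) :
    star u ⬝ᵥ vecMulVec z (star z) *ᵥ u = ((‖star z ⬝ᵥ u‖ ^ 2 : ℝ) : 𝕜) := by
  rw [vecMulVec_mulVec, op_smul_eq_smul, dotProduct_smul, star_dotProduct u z,
    smul_eq_mul, RCLike.star_def, RCLike.mul_conj]
  push_cast; rfl

theorem star_dotProduct_eq_of_star_dotProduct_eq_zero {x u : ι → 𝕜} (hperp : star u ⬝ᵥ x = 0)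
    (z : ι → 𝕜) : star z ⬝ᵥ u = star (z - x) ⬝ᵥ u := by
  rw [star_sub, sub_dotProduct, star_dotProduct x u, hperp, star_zero, sub_zero]

end QuadraticForms

section Certificate

variable {ι : Type*} [Fintype ι]

theorem rankOne_add_mulVec [DecidableEq ι] (z v : ι → ℂ) (Δ : Matrix ι ι ℂ) (α : ℝ) :
    (vecMulVec z (star z) + Δ + (α : ℂ) • 1) *ᵥ v = (star z ⬝ᵥ v) • z + Δ *ᵥ v + (α : ℂ) • v := by
  rw [add_mulVec, add_mulVec, vecMulVec_mulVec, op_smul_eq_smul, smul_mulVec, one_mulVec]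

theorem norm_star_dotProduct_sub_le_norm_rankOne_add_mulVec_apply [DecidableEq ι] {z x : ι → ℂ}
    (Δ : Matrix ι ι ℂ) {α : ℝ} (hα0 : 0 ≤ α) {i : ι} (hz : ‖z i‖ = 1) (hx : ‖x i‖ = 1) :
    ‖star z ⬝ᵥ x‖ - ‖(Δ *ᵥ x) i‖ - α ≤ ‖((vecMulVec z (star z) + Δ + (α : ℂ) • 1) *ᵥ x) i‖ := by
  rw [rankOne_add_mulVec]
  set a := (star z ⬝ᵥ x) * z i
  set b := (Δ *ᵥ x) i + α * x i
  have ha : ‖a‖ = ‖star z ⬝ᵥ x‖ := by rw [norm_mul, hz, mul_one]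
  have hb : ‖b‖ ≤ ‖(Δ *ᵥ x) i‖ + α := by
    refine (norm_add_le _ _).trans_eq ?_
    rw [norm_mul, hx, mul_one, norm_real, Real.norm_of_nonneg hα0]
  have hab : ‖a‖ ≤ ‖a + b‖ + ‖b‖ := by simpa using norm_sub_le (a + b) b
  have hsplit : ((star z ⬝ᵥ x) • z + Δ *ᵥ x + (α : ℂ) • x) i = a + b := by
    simp only [Pi.add_apply, Pi.smul_apply, smul_eq_mul, a, b]; ring
  rw [hsplit]
  linarith

theorem re_star_dotProduct_rankOne_add_mulVec [DecidableEq ι] (z u : ι → ℂ)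
    (Δ : Matrix ι ι ℂ) (α : ℝ) :
    (star u ⬝ᵥ (vecMulVec z (star z) + Δ + (α : ℂ) • 1) *ᵥ u).re
      = ‖star z ⬝ᵥ u‖ ^ 2 + (star u ⬝ᵥ Δ *ᵥ u).re + α * ∑ i, ‖u i‖ ^ 2 := by
  rw [add_mulVec, add_mulVec, dotProduct_add, dotProduct_add, star_dotProduct_vecMulVec_mulVec,
    smul_mulVec, one_mulVec, dotProduct_smul, star_dotProduct_self_eq, smul_eq_mul, add_re, add_re,
    re_ofReal_mul]
  rfl

end Certificate

theorem stmt13_general {n : ℕ} (z x u : Fin n → ℂ) (Δ : Matrix (Fin n) (Fin n) ℂ)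
    (α : ℝ) (hα0 : 0 ≤ α) (hα : α ≤ ‖Δ‖)
    (hz : ∀ i, ‖z i‖ = 1) (hx : ∀ i, ‖x i‖ = 1)
    (C : Matrix (Fin n) (Fin n) ℂ)
    (hC : C = Matrix.vecMulVec z (star z) + Δ + (α : ℂ) • 1)
    (hcorr1 : star z ⬝ᵥ x = (‖star z ⬝ᵥ x‖ : ℂ))
    (hcorr2 : (n : ℝ) - 8 * ‖Δ‖ ≤ ‖star z ⬝ᵥ x‖)
    (hfix : ∀ i, C.mulVec x i * (starRingEnd ℂ) (x i) = (‖C.mulVec x i‖ : ℂ))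
    (hperp : star u ⬝ᵥ x = 0) :
    (∑ i, ‖u i‖ ^ 2) *
        ((n : ℝ) - 27 * ‖Δ‖ - ⨆ i, ‖Δ.mulVec x i‖)
      ≤ (star u ⬝ᵥ (Matrix.diagonal (fun i => C.mulVec x i * (starRingEnd ℂ) (x i)) - C).mulVec
          u).re := by
  set N := ∑ i, ‖u i‖ ^ 2
  set M := ⨆ i, ‖Δ.mulVec x i‖
  have hS : (star u ⬝ᵥ (diagonal (fun i => (C *ᵥ x) i * (starRingEnd ℂ) (x i)) - C) *ᵥ u).re
      = ∑ i, ‖(C *ᵥ x) i‖ * ‖u i‖ ^ 2 - (‖star z ⬝ᵥ u‖ ^ 2 + (star u ⬝ᵥ Δ *ᵥ u).re + α * N) := by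
    rw [sub_mulVec, dotProduct_sub, sub_re, funext hfix]
    congr 1
    · exact re_star_dotProduct_diagonal_mulVec _ u
    · rw [hC]; exact re_star_dotProduct_rankOne_add_mulVec z u Δ α
  have hdiag : (‖star z ⬝ᵥ x‖ - M - α) * N ≤ ∑ i, ‖(C *ᵥ x) i‖ * ‖u i‖ ^ 2 := by
    rw [Finset.mul_sum]
    gcongr with i
    have hM : ‖(Δ *ᵥ x) i‖ ≤ M :=
      le_ciSup (f := fun j => ‖(Δ *ᵥ x) j‖) (Set.finite_range _).bddAbove i
    have hCx := hC ▸ norm_star_dotProduct_sub_le_norm_rankOne_add_mulVec_apply Δ hα0 (hz i) (hx i)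
    linarith
  have hzx : ∑ i, ‖z i - x i‖ ^ 2 ≤ 16 * ‖Δ‖ := by
    rw [sum_norm_sub_sq, sum_norm_sq_of_norm_eq_one hz, sum_norm_sq_of_norm_eq_one hx, hcorr1]
    simp only [RCLike.re_to_complex, ofReal_re, Fintype.card_fin]
    linarith
  have hzu : ‖star z ⬝ᵥ u‖ ^ 2 ≤ 16 * ‖Δ‖ * N := by
    rw [star_dotProduct_eq_of_star_dotProduct_eq_zero hperp]
    exact (norm_star_dotProduct_sq_le _ _).trans (by gcongr; exact hzx)
  have hΔu : (star u ⬝ᵥ Δ *ᵥ u).re ≤ ‖Δ‖ * N := re_star_dotProduct_mulVec_le Δ u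
  have hN : 0 ≤ N := by positivity
  rw [hS]
  linarith [mul_le_mul_of_nonneg_left hcorr2 hN, mul_le_mul_of_nonneg_left hα hN]

theorem stmt13 {n : ℕ} (hn : 0 < n) (z x u : Fin n → ℂ) (Δ : Matrix (Fin n) (Fin n) ℂ)
    (hΔ : Δ.IsHermitian) (α : ℝ) (hα0 : 0 ≤ α) (hα : α ≤ ‖Δ‖)
    (hz : ∀ i, ‖z i‖ = 1) (hx : ∀ i, ‖x i‖ = 1)
    (C : Matrix (Fin n) (Fin n) ℂ)
    (hC : C = Matrix.vecMulVec z (star z) + Δ + (α : ℂ) • 1)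
    (hcorr1 : star z ⬝ᵥ x = (‖star z ⬝ᵥ x‖ : ℂ))
    (hcorr2 : (n : ℝ) - 8 * ‖Δ‖ ≤ ‖star z ⬝ᵥ x‖)
    (hfix : ∀ i, C.mulVec x i * (starRingEnd ℂ) (x i) = (‖C.mulVec x i‖ : ℂ))
    (hperp : star u ⬝ᵥ x = 0) :
    (∑ i, ‖u i‖ ^ 2) *
        ((n : ℝ) - 27 * ‖Δ‖ - ⨆ i, ‖Δ.mulVec x i‖)
      ≤ (star u ⬝ᵥ (Matrix.diagonal (fun i => C.mulVec x i * (starRingEnd ℂ) (x i)) - C).mulVec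
          u).re :=
  stmt13_general z x u Δ α hα0 hα hz hx C hC hcorr1 hcorr2 hfix hperp
end

section
/- x ∈ ℂⁿ₁ is a first-order critical point of f(x) = x*Cx on ℂⁿ₁ (i.e., S(x)x = 0 where S(x) = Re{ddiag(Cxx*)} − C) if and only if the diagonal of Cxx* is real, i.e., (Cx)_i conj(x_i) ∈ ℝ for all i. -/
open Matrix Complex ComplexConjugate

theorem Complex.mul_conj_mul_of_norm_eq_one {u : ℂ} (hu : ‖u‖ = 1) (a : ℂ) :
    a * conj u * u = a := by
  rw [mul_assoc, mul_comm (conj u), mul_conj, normSq_eq_norm_sq, hu]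
  norm_num

theorem Complex.ofReal_re_sub_self_eq_zero_iff (z : ℂ) : (z.re : ℂ) - z = 0 ↔ z.im = 0 := by
  rw [sub_eq_zero, eq_comm, Complex.ext_iff]
  simp

theorem Matrix.diagonal_sub_mulVec_apply {n R : Type*} [Fintype n] [DecidableEq n] [Ring R]
    (d : n → R) (C : Matrix n n R) (x : n → R) (i : n) :
    ((diagonal d - C) *ᵥ x) i = d i * x i - (C *ᵥ x) i := by
  rw [sub_mulVec, Pi.sub_apply, mulVec_diagonal]

theorem stmt14_general {n : ℕ} (C : Matrix (Fin n) (Fin n) ℂ)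
    (x : Fin n → ℂ) (hx : ∀ i, ‖x i‖ = 1) :
    (Matrix.diagonal (fun i => ((C.mulVec x i * (starRingEnd ℂ) (x i)).re : ℂ)) - C).mulVec x = 0
      ↔ ∀ i, (C.mulVec x i * (starRingEnd ℂ) (x i)).im = 0 := by
  refine funext_iff.trans (forall_congr' fun i => ?_)
  rw [diagonal_sub_mulVec_apply, Pi.zero_apply]
  set w := C.mulVec x i * conj (x i)
  have hCx : C.mulVec x i = w * x i := (mul_conj_mul_of_norm_eq_one (hx i) _).symm
  have hxi : x i ≠ 0 := norm_ne_zero_iff.mp (by simp [hx i])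
  rw [hCx, ← sub_mul, mul_eq_zero, or_iff_left hxi, ofReal_re_sub_self_eq_zero_iff]

theorem stmt14 {n : ℕ} (C : Matrix (Fin n) (Fin n) ℂ) (hC : C.IsHermitian)
    (x : Fin n → ℂ) (hx : ∀ i, ‖x i‖ = 1) :
    (Matrix.diagonal (fun i => ((C.mulVec x i * (starRingEnd ℂ) (x i)).re : ℂ)) - C).mulVec x = 0
      ↔ ∀ i, (C.mulVec x i * (starRingEnd ℂ) (x i)).im = 0 :=
  stmt14_general C x hx
end

section
/- Let x ∈ ℂⁿ₁ satisfy the second-order condition: ⟨ẋ, S(x)ẋ⟩ ≥ 0 for all ẋ with Re(ẋ_i conj(x_i)) = 0 for all i, where S(x) = Re{ddiag(Cxx*)} − C. If diag(C) ≥ 0, then (Cx)_i conj(x_i) ≥ C_{ii} ≥ 0 for all i; if moreover x is first-order critical, then x*Cx = ‖Cx‖₁. -/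
open Matrix Complex

noncomputable section

open ComplexConjugate

/-!
Testing the second-order condition on the tangent direction `i x_i e_i` gives `S_ii ≥ 0`, that is
`μ_i := Re((Cx)_i conj x_i) ≥ C_ii ≥ 0`. At a first-order critical point `(Cx)_i = μ_i x_i`, so
`|(Cx)_i| = μ_i` and `x* C x = ∑ μ_i`.
-/

theorem star_single_dotProduct_mulVec_single {ι R : Type*} [Fintype ι] [DecidableEq ι]
    [NonUnitalSemiring R] [StarRing R] (S : Matrix ι ι R) (i : ι) (a : R) :
    star (Pi.single i a) ⬝ᵥ S *ᵥ Pi.single i a = star a * (S i i * a) := by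
  rw [← Pi.single_star, single_dotProduct, mulVec_single]
  rfl

theorem re_I_mul_mul_conj (z : ℂ) : (I * z * conj z).re = 0 := by
  rw [mul_assoc, mul_conj]
  simp

theorem re_diag_nonneg_of_secondOrder {ι : Type*} [Fintype ι] [DecidableEq ι]
    {S : Matrix ι ι ℂ} {x : ι → ℂ}
    (hsoc : ∀ xd : ι → ℂ, (∀ i, (xd i * conj (x i)).re = 0) → 0 ≤ (star xd ⬝ᵥ S *ᵥ xd).re)
    {i : ι} (hxi : ‖x i‖ = 1) : 0 ≤ (S i i).re := by
  have htangent : ∀ j, ((Pi.single i (I * x i) : ι → ℂ) j * conj (x j)).re = 0 := by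
    intro j
    rcases eq_or_ne j i with rfl | hji
    · simpa using re_I_mul_mul_conj (x j)
    · simp [hji]
  have h := hsoc _ htangent
  rw [star_single_dotProduct_mulVec_single] at h
  have hquad : star (I * x i) * (S i i * (I * x i)) = S i i := by
    have : conj (x i) * x i = 1 := by
      rw [mul_comm, mul_conj, normSq_eq_norm_sq, hxi]; norm_num
    calc star (I * x i) * (S i i * (I * x i))
        = -(I * I) * (conj (x i) * x i) * S i i := by
          simp only [star_mul', star_def, conj_I]; ring
      _ = S i i := by rw [this, I_mul_I]; ring
  rwa [hquad] at h

theorem mulVec_eq_of_diagonal_sub_mulVec_eq_zero {ι R : Type*} [Fintype ι] [DecidableEq ι]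
    [Ring R] {C : Matrix ι ι R} {d x : ι → R} (h : (diagonal d - C) *ᵥ x = 0) (i : ι) :
    (C *ᵥ x) i = d i * x i := by
  have := congrFun h i
  rw [sub_mulVec, Pi.sub_apply, mulVec_diagonal, Pi.zero_apply, sub_eq_zero] at this
  exact this.symm

theorem stmt15_general {n : ℕ} (C : Matrix (Fin n) (Fin n) ℂ)
    (hdiag : ∀ i, 0 ≤ (C i i).re)
    (x : Fin n → ℂ) (hx : ∀ i, ‖x i‖ = 1)
    (S : Matrix (Fin n) (Fin n) ℂ)
    (hS : S = Matrix.diagonal (fun i => ((C.mulVec x i * (starRingEnd ℂ) (x i)).re : ℂ)) - C)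
    (hsoc : ∀ xd : Fin n → ℂ, (∀ i, (xd i * (starRingEnd ℂ) (x i)).re = 0) →
      0 ≤ (star xd ⬝ᵥ S.mulVec xd).re) :
    (∀ i, (C i i).re ≤ (C.mulVec x i * (starRingEnd ℂ) (x i)).re) ∧
    (S.mulVec x = 0 →
      star x ⬝ᵥ C.mulVec x = ((∑ i, ‖C.mulVec x i‖ : ℝ) : ℂ)) := by
  set μ : Fin n → ℝ := fun i => (C.mulVec x i * conj (x i)).re
  have hμ : ∀ i, (C i i).re ≤ μ i := fun i => by
    simpa [hS, μ] using re_diag_nonneg_of_secondOrder hsoc (hx i)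
  refine ⟨hμ, fun hcrit => ?_⟩
  have hCx := mulVec_eq_of_diagonal_sub_mulVec_eq_zero (hS ▸ hcrit)
  have hnorm : ∀ i, ‖C.mulVec x i‖ = μ i := fun i => by
    rw [hCx, norm_mul, norm_real, Real.norm_of_nonneg ((hdiag i).trans (hμ i)), hx i, mul_one]
  have hterm : ∀ i, star (x i) * C.mulVec x i = μ i := fun i => by
    rw [hCx, star_def, mul_left_comm, conj_mul', hx i, ofReal_one, one_pow, mul_one]
  simp only [dotProduct, Pi.star_apply, hterm, hnorm, ofReal_sum]

theorem stmt15 {n : ℕ} (C : Matrix (Fin n) (Fin n) ℂ) (hC : C.IsHermitian)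
    (hdiag : ∀ i, 0 ≤ (C i i).re)
    (x : Fin n → ℂ) (hx : ∀ i, ‖x i‖ = 1)
    (S : Matrix (Fin n) (Fin n) ℂ)
    (hS : S = Matrix.diagonal (fun i => ((C.mulVec x i * (starRingEnd ℂ) (x i)).re : ℂ)) - C)
    (hsoc : ∀ xd : Fin n → ℂ, (∀ i, (xd i * (starRingEnd ℂ) (x i)).re = 0) →
      0 ≤ (star xd ⬝ᵥ S.mulVec xd).re) :
    (∀ i, (C i i).re ≤ (C.mulVec x i * (starRingEnd ℂ) (x i)).re) ∧
    (S.mulVec x = 0 →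
      star x ⬝ᵥ C.mulVec x = ((∑ i, ‖C.mulVec x i‖ : ℝ) : ℂ)) :=
  stmt15_general C hdiag x hx S hS hsoc
end
end

section
/- Let C = zz* + Δ with diag(C) ≥ 0. If x ∈ ℂⁿ₁ is a second-order critical point of f(x) = x*Cx on ℂⁿ₁, then for every sign vector s ∈ {±1}ⁿ, x*Cx ≥ (s⊙x)*C(s⊙x), where ⊙ denotes entrywise product. -/
open Matrix Complex

/-! Rotating the sign-flipped point `s ⊙ x` by `i` gives a tangent vector at `x`, since
`(i sᵢ xᵢ) conj xᵢ = i sᵢ` is imaginary. Rotation by `i` leaves the quadratic form of `S` unchanged,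
and on unit-modulus vectors the diagonal part of `S` contributes `∑ Re((Cx)ᵢ conj xᵢ) = x*Cx`.
So the second-order condition reads `0 ≤ x*Cx − (s⊙x)*C(s⊙x)`. -/

open scoped ComplexConjugate

section QuadraticForm

variable {ι R : Type*} [Fintype ι] [CommRing R] [StarRing R]

theorem star_smul_dotProduct_mulVec_smul {c : R} (hc : star c * c = 1)
    (M : Matrix ι ι R) (v : ι → R) :
    star (c • v) ⬝ᵥ M *ᵥ (c • v) = star v ⬝ᵥ M *ᵥ v := by
  rw [star_smul, mulVec_smul, smul_dotProduct, dotProduct_smul, smul_smul, smul_eq_mul, hc,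
    one_mul]

theorem star_dotProduct_diagonal_mulVec_of_star_mul_self [DecidableEq ι] (d : ι → R)
    {y : ι → R} (hy : ∀ i, star (y i) * y i = 1) :
    star y ⬝ᵥ diagonal d *ᵥ y = ∑ i, d i := by
  refine Finset.sum_congr rfl fun i _ => ?_
  rw [mulVec_diagonal, Pi.star_apply, mul_left_comm, hy, mul_one]

end QuadraticForm

theorem Complex.star_mul_self_of_norm_eq_one {w : ℂ} (hw : ‖w‖ = 1) : star w * w = 1 := by
  rw [star_def, conj_mul', hw]
  norm_num

theorem Complex.re_I_mul_ofReal_mul_mul_conj (r : ℝ) (w : ℂ) :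
    (I * ((r : ℂ) * w) * conj w).re = 0 := by
  rw [mul_assoc, mul_assoc, mul_conj]
  simp

theorem Matrix.sum_re_mulVec_mul_conj {ι : Type*} [Fintype ι] (M : Matrix ι ι ℂ) (x : ι → ℂ) :
    ∑ i, ((M *ᵥ x) i * conj (x i)).re = (star x ⬝ᵥ M *ᵥ x).re := by
  rw [dotProduct, re_sum]
  simp only [Pi.star_apply, star_def, mul_comm]

theorem stmt16_general {n : ℕ} (x : Fin n → ℂ)
    (hx : ∀ i, ‖x i‖ = 1)
    (C : Matrix (Fin n) (Fin n) ℂ)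
    (S : Matrix (Fin n) (Fin n) ℂ)
    (hS : S = Matrix.diagonal (fun i => ((C.mulVec x i * (starRingEnd ℂ) (x i)).re : ℂ)) - C)
    (hsoc : ∀ xd : Fin n → ℂ, (∀ i, (xd i * (starRingEnd ℂ) (x i)).re = 0) →
      0 ≤ (star xd ⬝ᵥ S.mulVec xd).re) :
    ∀ s : Fin n → ℝ, (∀ i, s i = 1 ∨ s i = -1) →
      (star (fun i => (s i : ℂ) * x i) ⬝ᵥ C.mulVec (fun i => (s i : ℂ) * x i)).re
        ≤ (star x ⬝ᵥ C.mulVec x).re := by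
  intro s hs
  set y : Fin n → ℂ := fun i => (s i : ℂ) * x i
  have hy_unit : ∀ i, star (y i) * y i = 1 := fun i =>
    star_mul_self_of_norm_eq_one <| by
      rcases hs i with h | h <;> simp [y, h, hx i]
  have hsecond := hsoc (I • y) fun i => re_I_mul_ofReal_mul_mul_conj (s i) (x i)
  rw [star_smul_dotProduct_mulVec_smul (star_mul_self_of_norm_eq_one (by simp)), hS,
    sub_mulVec, dotProduct_sub, sub_re, star_dotProduct_diagonal_mulVec_of_star_mul_self _ hy_unit,
    re_sum, Finset.sum_congr rfl fun i _ => ofReal_re _, sum_re_mulVec_mul_conj] at hsecond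
  linarith

theorem stmt16 {n : ℕ} (z x : Fin n → ℂ) (Δ : Matrix (Fin n) (Fin n) ℂ)
    (hΔ : Δ.IsHermitian)
    (hz : ∀ i, ‖z i‖ = 1) (hx : ∀ i, ‖x i‖ = 1)
    (C : Matrix (Fin n) (Fin n) ℂ) (hC : C = Matrix.vecMulVec z (star z) + Δ)
    (hdiag : ∀ i, 0 ≤ (C i i).re)
    (S : Matrix (Fin n) (Fin n) ℂ)
    (hS : S = Matrix.diagonal (fun i => ((C.mulVec x i * (starRingEnd ℂ) (x i)).re : ℂ)) - C)
    (hfoc : S.mulVec x = 0)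
    (hsoc : ∀ xd : Fin n → ℂ, (∀ i, (xd i * (starRingEnd ℂ) (x i)).re = 0) →
      0 ≤ (star xd ⬝ᵥ S.mulVec xd).re) :
    ∀ s : Fin n → ℝ, (∀ i, s i = 1 ∨ s i = -1) →
      (star (fun i => (s i : ℂ) * x i) ⬝ᵥ C.mulVec (fun i => (s i : ℂ) * x i)).re
        ≤ (star x ⬝ᵥ C.mulVec x).re :=
  stmt16_general x hx C S hS hsoc
end

section
/- For any x, z ∈ ℂⁿ₁, there exists a sign vector s ∈ {±1}ⁿ such that |z*(s ⊙ x)|² ≥ n²/4. -/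
/-!
Write `w i = conj (z i) * x i`, so that `z*(s ⊙ x) = ∑ sᵢ wᵢ` with `|wᵢ| = 1`. Choosing
`sᵢ = sign (Re wᵢ)` makes the real part of the sum equal to `∑ |Re wᵢ|`, and likewise with the
imaginary parts. Since `|Re wᵢ| + |Im wᵢ| ≥ |wᵢ| = 1`, one of the two sums is at least `n / 2`.
-/

open Matrix Complex

open scoped ComplexConjugate

noncomputable section

variable {ι : Type*} [Fintype ι]

lemma exists_signs_sum_abs_re_le_norm (w : ι → ℂ) :
    ∃ s : ι → ℝ, (∀ i, s i = 1 ∨ s i = -1) ∧ ∑ i, |(w i).re| ≤ ‖∑ i, (s i : ℂ) * w i‖ := by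
  refine ⟨fun i => if 0 ≤ (w i).re then 1 else -1, fun i => by dsimp only; split_ifs <;> simp, ?_⟩
  have hre : (∑ i, ((if 0 ≤ (w i).re then 1 else -1 : ℝ) : ℂ) * w i).re = ∑ i, |(w i).re| := by
    rw [re_sum]
    refine Finset.sum_congr rfl fun i _ => ?_
    split_ifs with hi
    · simp [abs_of_nonneg hi]
    · simp [abs_of_neg (not_le.mp hi)]
  rw [← hre]
  exact (le_abs_self _).trans (abs_re_le_norm _)

lemma exists_signs_sum_abs_im_le_norm (w : ι → ℂ) :
    ∃ s : ι → ℝ, (∀ i, s i = 1 ∨ s i = -1) ∧ ∑ i, |(w i).im| ≤ ‖∑ i, (s i : ℂ) * w i‖ := by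
  obtain ⟨s, hs, hle⟩ := exists_signs_sum_abs_re_le_norm (fun i => I * w i)
  refine ⟨s, hs, ?_⟩
  have hrot : ∑ i, (s i : ℂ) * (I * w i) = I * ∑ i, (s i : ℂ) * w i := by
    rw [Finset.mul_sum]
    exact Finset.sum_congr rfl fun i _ => by ring
  simpa [hrot] using hle

lemma exists_signs_half_sum_norm_le_norm (w : ι → ℂ) :
    ∃ s : ι → ℝ, (∀ i, s i = 1 ∨ s i = -1) ∧ (∑ i, ‖w i‖) / 2 ≤ ‖∑ i, (s i : ℂ) * w i‖ := by
  have hsplit : ∑ i, ‖w i‖ ≤ ∑ i, |(w i).re| + ∑ i, |(w i).im| := by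
    rw [← Finset.sum_add_distrib]
    exact Finset.sum_le_sum fun i _ => norm_le_abs_re_add_abs_im (w i)
  rcases le_total (∑ i, |(w i).im|) (∑ i, |(w i).re|) with h | h
  · obtain ⟨s, hs, hle⟩ := exists_signs_sum_abs_re_le_norm w
    exact ⟨s, hs, by linarith⟩
  · obtain ⟨s, hs, hle⟩ := exists_signs_sum_abs_im_le_norm w
    exact ⟨s, hs, by linarith⟩

theorem stmt17 {n : ℕ} (z x : Fin n → ℂ)
    (hz : ∀ i, ‖z i‖ = 1) (hx : ∀ i, ‖x i‖ = 1) :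
    ∃ s : Fin n → ℝ, (∀ i, s i = 1 ∨ s i = -1) ∧
      (n : ℝ) ^ 2 / 4 ≤ ‖(star z ⬝ᵥ fun i => (s i : ℂ) * x i)‖ ^ 2 := by
  set w : Fin n → ℂ := fun i => conj (z i) * x i
  have hdot (s : Fin n → ℝ) : (star z ⬝ᵥ fun i => (s i : ℂ) * x i) = ∑ i, (s i : ℂ) * w i :=
    Finset.sum_congr rfl fun i _ => by simp only [Pi.star_apply, RCLike.star_def, w]; ring
  have hnorm : ∑ i, ‖w i‖ = n := by simp [w, hz, hx]
  obtain ⟨s, hs, hle⟩ := exists_signs_half_sum_norm_le_norm w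
  refine ⟨s, hs, ?_⟩
  rw [hnorm] at hle
  rw [hdot]
  calc (n : ℝ) ^ 2 / 4 = ((n : ℝ) / 2) ^ 2 := by ring
    _ ≤ ‖∑ i, (s i : ℂ) * w i‖ ^ 2 := pow_le_pow_left₀ (by positivity) hle 2
end
end
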